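/- Let q be a power of a prime p. For any sequence S over F_q and N ≥ 2, let k be the nonnegative integer with p^k ≤ N−1 < p^{k+1}. Then E_N(S) ≤ ⌊(N−1)/p^k⌋ · p^k. -/

import Mathlib

/-- The `N`-th linear complexity of a sequence `s` over a field: the length of a
shortest linear recurrence satisfied by the first `N` terms. -/
noncomputable def linComplexityN {F : Type*} [Field F] (s : ℕ → F) (N : ℕ) : ℕ :=
  sInf {L | ∃ c : Fin L → F, ∀ i, i + L < N →
    s (i + L) + ∑ ℓ : Fin L, c ℓ * s (i + ℓ.1) = 0}

open Classical in
/-- The `N`-th expansion complexity of a sequence `s` over a field: `0` if the first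
`N` terms vanish, otherwise the least total degree of a nonzero bivariate polynomial
`h(x,y)` with `h(x, G(x)) ≡ 0 mod x^N`, where `G` is the generating function of `s`. -/
noncomputable def expComplexityN {F : Type*} [Field F] (s : ℕ → F) (N : ℕ) : ℕ :=
  if ∀ i < N, s i = 0 then 0 else
  sInf {d | ∃ h : MvPolynomial (Fin 2) F, h ≠ 0 ∧ h.totalDegree = d ∧
    (PowerSeries.X : PowerSeries F) ^ N ∣
      MvPolynomial.aeval ![(PowerSeries.X : PowerSeries F), PowerSeries.mk s] h}

namespace Polynomial

theorem totalDegree_toMvPolynomial_le {R σ : Type*} [CommSemiring R] (g : Polynomial R) (i : σ) :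
    (g.toMvPolynomial i).totalDegree ≤ g.natDegree := by
  conv_lhs => rw [g.as_sum_range_C_mul_X_pow]
  simp only [map_sum, map_mul, map_pow, toMvPolynomial_C, toMvPolynomial_X,
    MvPolynomial.C_mul_X_pow_eq_monomial]
  refine (MvPolynomial.totalDegree_finsetSum _ _).trans (Finset.sup_le fun j hj => ?_)
  refine (MvPolynomial.totalDegree_monomial_le _ _).trans ?_
  simpa [Nat.lt_succ_iff] using hj

theorem X_sub_toMvPolynomial_ne_zero {R σ : Type*} [CommRing R] [Nontrivial R] {i j : σ}
    (hij : i ≠ j) (g : Polynomial R) : MvPolynomial.X j - g.toMvPolynomial i ≠ 0 := by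
  classical
  intro h
  have := congrArg (MvPolynomial.eval fun l => if l = i then 0 else g.eval 0 + 1) h
  simp [hij.symm] at this

end Polynomial

namespace PowerSeries

theorem aeval_X_eq_coe {R : Type*} [CommSemiring R] (g : Polynomial R) :
    Polynomial.aeval (X : PowerSeries R) g = g := by
  simpa using Polynomial.aeval_algHom_apply (Polynomial.coeToPowerSeries.algHom R) Polynomial.X g

theorem X_pow_dvd_sub_trunc {R : Type*} [CommRing R] (f : PowerSeries R) (n : ℕ) :
    X ^ n ∣ f - (trunc n f : PowerSeries R) := by
  rw [X_pow_dvd_iff]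
  intro m hm
  simp [coeff_trunc, hm]

end PowerSeries

theorem expComplexityN_le_totalDegree {F : Type*} [Field F] (s : ℕ → F) (N : ℕ)
    {h : MvPolynomial (Fin 2) F} (h_ne : h ≠ 0)
    (h_dvd : (PowerSeries.X : PowerSeries F) ^ N ∣
      MvPolynomial.aeval ![(PowerSeries.X : PowerSeries F), PowerSeries.mk s] h) :
    expComplexityN s N ≤ h.totalDegree := by
  unfold expComplexityN
  split_ifs
  · exact Nat.zero_le _
  · exact Nat.sInf_le ⟨h, h_ne, rfl, h_dvd⟩

/-- The witness is `(y - g(x))^q`, where `g` is the truncation of the generating function `G`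
after its `m + 1 = ⌊(N-1)/q⌋ + 1` first terms: it has total degree at most `m q` and its value
at `y = G(x)` is `(G - g)^q`, of order at least `(m + 1) q ≥ N`. For `q = p^k` in characteristic
`p` it expands to `y^q - ∑_{i ≤ m} s_i^q x^(iq)`. -/
theorem expComplexityN_le_div_mul {F : Type*} [Field F] (s : ℕ → F) (N : ℕ) {q : ℕ}
    (hq : 0 < q) (hqN : q ≤ N - 1) :
    expComplexityN s N ≤ ((N - 1) / q) * q := by
  set m := (N - 1) / q
  have hm : 1 ≤ m := (Nat.one_le_div_iff hq).mpr hqN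
  set g := PowerSeries.trunc (m + 1) (PowerSeries.mk s)
  set h : MvPolynomial (Fin 2) F := (MvPolynomial.X 1 - g.toMvPolynomial 0) ^ q
  have h_ne : h ≠ 0 := pow_ne_zero _ (g.X_sub_toMvPolynomial_ne_zero (by decide))
  have h_deg : h.totalDegree ≤ m * q := calc
    h.totalDegree ≤ q * max 1 g.natDegree :=
      (MvPolynomial.totalDegree_pow _ _).trans <| Nat.mul_le_mul_left _ <|
        (MvPolynomial.totalDegree_sub _ _).trans <| by
          rw [MvPolynomial.totalDegree_X]
          exact max_le_max le_rfl (g.totalDegree_toMvPolynomial_le 0)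
    _ ≤ q * m := Nat.mul_le_mul_left _ <| max_le hm <|
          Nat.lt_succ_iff.mp (PowerSeries.natDegree_trunc_lt _ m)
    _ = m * q := mul_comm _ _
  have h_dvd : (PowerSeries.X : PowerSeries F) ^ N ∣
      MvPolynomial.aeval ![(PowerSeries.X : PowerSeries F), PowerSeries.mk s] h := by
    have hN : N ≤ (m + 1) * q := by
      have : N - 1 < m * q + q := Nat.lt_div_mul_add hq
      rw [add_mul, one_mul]
      omega
    simp only [h, map_pow, map_sub, MvPolynomial.aeval_X, MvPolynomial.aeval_toMvPolynomial,
      Matrix.cons_val_one, Matrix.cons_val_zero, PowerSeries.aeval_X_eq_coe]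
    refine (pow_dvd_pow _ hN).trans ?_
    rw [pow_mul]
    exact pow_dvd_pow_of_dvd (PowerSeries.X_pow_dvd_sub_trunc _ _) q
  exact (expComplexityN_le_totalDegree s N h_ne h_dvd).trans h_deg

theorem expComplexityN_char_upper_bound_general {F : Type*} [Field F]
    (p : ℕ) [Fact p.Prime]
    (s : ℕ → F) (N : ℕ) (k : ℕ)
    (hk1 : p ^ k ≤ N - 1) :
    expComplexityN s N ≤ ((N - 1) / p ^ k) * p ^ k :=
  expComplexityN_le_div_mul s N (pow_pos (Fact.out : p.Prime).pos k) hk1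

theorem expComplexityN_char_upper_bound {F : Type*} [Field F] [Fintype F]
    (p : ℕ) [Fact p.Prime] [CharP F p]
    (s : ℕ → F) (N : ℕ) (hN : 2 ≤ N) (k : ℕ)
    (hk1 : p ^ k ≤ N - 1) (hk2 : N - 1 < p ^ (k + 1)) :
    expComplexityN s N ≤ ((N - 1) / p ^ k) * p ^ k :=
  expComplexityN_char_upper_bound_general p s N k hk1
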